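/- Let (E,𝓑) be a q-Steiner system S(t,k,n;q) and let 𝓕 be the set of all intersections of subfamilies of 𝓑 (with the empty intersection equal to E). Then 𝓕 satisfies the flat axioms (F1)-(F3), and hence defines a q-matroid on E. -/

import Mathlib

/-!
Only the closure `F'` of `F ⊔ x` (the intersection of the blocks containing it) can cover `F`,
so (F3) reduces to showing that no flat `H` lies strictly between `F` and `F'`. If
`dim F ≥ t`, then `F` contains a `t`-space, so at most one block contains `F`, and every flat
strictly above `F` is `E`. If `dim F < t`, double counting pairs (t-space, block) through a
subspace `U` with `dim U ≤ t` shows that the number of blocks containing `U` depends only on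
`dim U`. For `v ∈ H \ F`, every block containing `F ⊔ x` contains `F ⊔ ⟨v⟩`, a subspace of the
same dimension; hence both have the same blocks, and `F' ≤ H`.
-/

/-- F' covers F in the poset (𝓕, ⊆). -/
def FlatCovers {K E : Type*} [Field K] [AddCommGroup E] [Module K E]
    (𝓕 : Set (Submodule K E)) (F F' : Submodule K E) : Prop :=
  F < F' ∧ ∀ H ∈ 𝓕, F < H → ¬ H < F'

/-- 𝓑 is a q-Steiner system S(t,k,n;q) on E = K^n: a collection of
k-dimensional subspaces such that every t-dimensional subspace is contained in
exactly one member of 𝓑. -/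
def IsSteinerSystem {K : Type*} [Field K] [Fintype K] {n : ℕ}
    (t k : ℕ) (𝓑 : Set (Submodule K (Fin n → K))) : Prop :=
  1 ≤ t ∧ t ≤ k ∧ k ≤ n ∧
  (∀ B ∈ 𝓑, Module.finrank K B = k) ∧
  (∀ T : Submodule K (Fin n → K), Module.finrank K T = t → ∃! B, B ∈ 𝓑 ∧ T ≤ B)

open Module Submodule

section LinearAlgebra

variable {K V V' : Type*} [Field K] [AddCommGroup V] [Module K V] [AddCommGroup V'] [Module K V']

def subspacesBetween (U W : Submodule K V) (d : ℕ) : Set (Submodule K V) :=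
  {P | U ≤ P ∧ P ≤ W ∧ finrank K P = d}

theorem exists_linearEquiv_map_eq [FiniteDimensional K V] [FiniteDimensional K V']
    {U : Submodule K V} {U' : Submodule K V'} (hU : finrank K U = finrank K U')
    (hV : finrank K V = finrank K V') : ∃ e : V ≃ₗ[K] V', U.map (e : V →ₗ[K] V') = U' := by
  obtain ⟨C, hC⟩ := U.exists_isCompl
  obtain ⟨C', hC'⟩ := U'.exists_isCompl
  have hCC' : finrank K C = finrank K C' := by
    have := finrank_add_eq_of_isCompl hC
    have := finrank_add_eq_of_isCompl hC'
    omega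
  let eU := LinearEquiv.ofFinrankEq U U' hU
  let e := (prodEquivOfIsCompl U C hC).symm ≪≫ₗ
    (eU.prodCongr (LinearEquiv.ofFinrankEq C C' hCC')) ≪≫ₗ prodEquivOfIsCompl U' C' hC'
  refine ⟨e, eq_of_le_of_finrank_eq ?_ (by rw [LinearEquiv.finrank_map_eq, hU])⟩
  rintro _ ⟨u, hu, rfl⟩
  have hsplit : (prodEquivOfIsCompl U C hC).symm u = (⟨u, hu⟩, 0) :=
    prodEquivOfIsCompl_symm_apply_left U C hC ⟨u, hu⟩
  simp [e, hsplit]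

theorem image_map_subspacesBetween {f : V →ₗ[K] V'} (hf : Function.Injective f)
    (U W : Submodule K V) (d : ℕ) :
    map f '' subspacesBetween U W d = subspacesBetween (U.map f) (W.map f) d := by
  have hfin (P : Submodule K V) : finrank K (P.map f) = finrank K P :=
    (P.equivMapOfInjective f hf).finrank_eq.symm
  ext P'
  constructor
  · rintro ⟨P, ⟨hUP, hPW, hP⟩, rfl⟩
    exact ⟨map_mono hUP, map_mono hPW, (hfin P).trans hP⟩
  · rintro ⟨hUP', hP'W, hP'⟩
    have hP'range : map f (comap f P') = P' :=
      map_comap_eq_self (hP'W.trans LinearMap.map_le_range)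
    refine ⟨comap f P', ⟨?_, ?_, ?_⟩, hP'range⟩
    · exact (comap_map_eq_of_injective hf U).symm.le.trans (comap_mono hUP')
    · exact (comap_mono hP'W).trans (comap_map_eq_of_injective hf W).le
    · rwa [← hfin, hP'range]

theorem ncard_subspacesBetween_map {f : V →ₗ[K] V'} (hf : Function.Injective f)
    (U W : Submodule K V) (d : ℕ) :
    (subspacesBetween (U.map f) (W.map f) d).ncard = (subspacesBetween U W d).ncard := by
  rw [← image_map_subspacesBetween hf,
    Set.ncard_image_of_injective _ (map_injective_of_injective hf)]

theorem ncard_subspacesBetween_eq_comap_subtype {U W : Submodule K V} (hUW : U ≤ W) (d : ℕ) :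
    (subspacesBetween U W d).ncard = (subspacesBetween (U.comap W.subtype) ⊤ d).ncard := by
  rw [← ncard_subspacesBetween_map W.injective_subtype, map_comap_subtype, inf_eq_right.2 hUW,
    map_subtype_top]

theorem ncard_subspacesBetween_congr [FiniteDimensional K V] [FiniteDimensional K V']
    {U W : Submodule K V} {U' W' : Submodule K V'} (hUW : U ≤ W) (hUW' : U' ≤ W')
    (hU : finrank K U = finrank K U') (hW : finrank K W = finrank K W') (d : ℕ) :
    (subspacesBetween U W d).ncard = (subspacesBetween U' W' d).ncard := by
  rw [ncard_subspacesBetween_eq_comap_subtype hUW, ncard_subspacesBetween_eq_comap_subtype hUW']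
  obtain ⟨e, he⟩ := exists_linearEquiv_map_eq (V := W) (V' := W')
    (U := U.comap W.subtype) (U' := U'.comap W'.subtype)
    (by rw [(comapSubtypeEquivOfLe hUW).finrank_eq, (comapSubtypeEquivOfLe hUW').finrank_eq, hU]) hW
  rw [← he, ← ncard_subspacesBetween_map e.injective, Submodule.map_top, LinearEquiv.range]

theorem subspacesBetween_nonempty [FiniteDimensional K V] {U W : Submodule K V} (hUW : U ≤ W)
    {d : ℕ} (hUd : finrank K U ≤ d) (hdW : d ≤ finrank K W) :
    (subspacesBetween U W d).Nonempty := by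
  induction d, hUd using Nat.le_induction with
  | base => exact ⟨U, le_rfl, hUW, rfl⟩
  | succ d _ ih =>
    obtain ⟨T, hUT, hTW, rfl⟩ := ih (by omega)
    obtain ⟨v, hvW, hvT⟩ := SetLike.exists_of_lt (lt_of_le_of_finrank_lt_finrank hTW (by omega))
    exact ⟨T ⊔ span K {v}, hUT.trans le_sup_left,
      sup_le hTW ((span_singleton_le_iff_mem v W).2 hvW), finrank_sup_span_singleton hvT⟩

theorem finrank_sup_of_finrank_eq_one [FiniteDimensional K V] {F x : Submodule K V}
    (hx : finrank K x = 1) (hxF : ¬ x ≤ F) :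
    finrank K (F ⊔ x : Submodule K V) = finrank K F + 1 := by
  obtain ⟨v, hvx, hvF⟩ := SetLike.not_le_iff_exists.1 hxF
  have hv : span K {v} = x := eq_of_le_of_finrank_eq ((span_singleton_le_iff_mem v x).2 hvx)
    (by rw [hx, finrank_span_singleton (by rintro rfl; exact hvF F.zero_mem)])
  rw [← hv, finrank_sup_span_singleton hvF]

end LinearAlgebra

section Flats

variable {α : Type*} [CompleteLattice α] (𝓑 : Set α)

def blocksAbove (a : α) : Set α := {B | B ∈ 𝓑 ∧ a ≤ B}

def flats : Set α := {F | ∃ S ⊆ 𝓑, F = sInf S}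

def flatClosure (a : α) : α := sInf (blocksAbove 𝓑 a)

variable {𝓑}

theorem top_mem_flats : ⊤ ∈ flats 𝓑 := ⟨∅, Set.empty_subset _, sInf_empty.symm⟩

theorem inf_mem_flats {F₁ F₂ : α} (h₁ : F₁ ∈ flats 𝓑) (h₂ : F₂ ∈ flats 𝓑) : F₁ ⊓ F₂ ∈ flats 𝓑 := by
  obtain ⟨S₁, hS₁, rfl⟩ := h₁
  obtain ⟨S₂, hS₂, rfl⟩ := h₂
  exact ⟨S₁ ∪ S₂, Set.union_subset hS₁ hS₂, sInf_union.symm⟩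

theorem le_flatClosure (a : α) : a ≤ flatClosure 𝓑 a := le_sInf fun _ hB => hB.2

theorem flatClosure_mem_flats (a : α) : flatClosure 𝓑 a ∈ flats 𝓑 := ⟨_, fun _ hB => hB.1, rfl⟩

theorem flatClosure_mono {a b : α} (h : a ≤ b) : flatClosure 𝓑 a ≤ flatClosure 𝓑 b :=
  sInf_le_sInf fun _ hB => ⟨hB.1, h.trans hB.2⟩

theorem flatClosure_eq_of_mem_flats {F : α} (hF : F ∈ flats 𝓑) : flatClosure 𝓑 F = F := by
  obtain ⟨S, hS, rfl⟩ := hF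
  exact le_antisymm (sInf_le_sInf fun B hB => ⟨hS hB, sInf_le hB⟩) (le_flatClosure _)

theorem flatClosure_le_of_le {a F : α} (hF : F ∈ flats 𝓑) (h : a ≤ F) : flatClosure 𝓑 a ≤ F :=
  (flatClosure_mono h).trans_eq (flatClosure_eq_of_mem_flats hF)

end Flats

namespace IsSteinerSystem

variable {K : Type*} [Field K] [Fintype K] {n t k : ℕ} {𝓑 : Set (Submodule K (Fin n → K))}

theorem exists_mem_blocksAbove (h𝓑 : IsSteinerSystem t k 𝓑) {U : Submodule K (Fin n → K)}
    (hU : finrank K U ≤ t) : ∃ B, B ∈ blocksAbove 𝓑 U := by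
  obtain ⟨-, htk, hkn, -, hunique⟩ := h𝓑
  obtain ⟨T, hUT, -, hT⟩ := subspacesBetween_nonempty le_top hU
    (by rw [finrank_top, finrank_fin_fun]; omega)
  obtain ⟨B, ⟨hB, hTB⟩, -⟩ := hunique T hT
  exact ⟨B, hB, hUT.trans hTB⟩

theorem ncard_subspacesBetween_top (h𝓑 : IsSteinerSystem t k 𝓑) {U B₀ : Submodule K (Fin n → K)}
    (hB₀ : B₀ ∈ blocksAbove 𝓑 U) :
    (subspacesBetween U ⊤ t).ncard =
      (blocksAbove 𝓑 U).ncard * (subspacesBetween U B₀ t).ncard := by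
  classical
  obtain ⟨-, -, -, hdim, hunique⟩ := h𝓑
  have key := Finset.card_mul_eq_card_mul (fun T B => T ≤ B)
    (s := (Set.toFinite (subspacesBetween U ⊤ t)).toFinset)
    (t := (Set.toFinite (blocksAbove 𝓑 U)).toFinset)
    (m := 1) (n := (subspacesBetween U B₀ t).ncard) ?_ ?_
  · rwa [mul_one, ← Set.ncard_eq_toFinset_card, ← Set.ncard_eq_toFinset_card] at key
  · intro T hT
    obtain ⟨hUT, -, hT⟩ := (Set.Finite.mem_toFinset _).1 hT
    obtain ⟨B, hB, hB_unique⟩ := hunique T hT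
    refine Finset.card_eq_one.2 ⟨B, Finset.ext fun B' => ?_⟩
    simp only [Finset.mem_bipartiteAbove, Set.Finite.mem_toFinset, Finset.mem_singleton]
    exact ⟨fun hB' => hB_unique B' ⟨hB'.1.1, hB'.2⟩,
      by rintro rfl; exact ⟨⟨hB.1, hUT.trans hB.2⟩, hB.2⟩⟩
  · intro B hB
    obtain ⟨hB, hUB⟩ := (Set.Finite.mem_toFinset _).1 hB
    have hbelow : ((Set.toFinite (subspacesBetween U ⊤ t)).toFinset.bipartiteBelow
        (fun T B => T ≤ B) B : Set _) = subspacesBetween U B t := by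
      ext T
      simp only [Finset.mem_coe, Finset.mem_bipartiteBelow, Set.Finite.mem_toFinset,
        subspacesBetween, Set.mem_ofPred_eq, le_top, true_and]
      tauto
    rw [← Set.ncard_coe_finset, hbelow]
    exact ncard_subspacesBetween_congr hUB hB₀.2 rfl (by rw [hdim B hB, hdim B₀ hB₀.1]) t

theorem ncard_blocksAbove_congr (h𝓑 : IsSteinerSystem t k 𝓑) {U U' : Submodule K (Fin n → K)}
    (hUU' : finrank K U = finrank K U') (hU : finrank K U ≤ t) :
    (blocksAbove 𝓑 U).ncard = (blocksAbove 𝓑 U').ncard := by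
  have htk : t ≤ k := h𝓑.2.1
  have hdim : ∀ B ∈ 𝓑, finrank K B = k := h𝓑.2.2.2.1
  obtain ⟨B, hB⟩ := h𝓑.exists_mem_blocksAbove hU
  obtain ⟨B', hB'⟩ := h𝓑.exists_mem_blocksAbove (hUU' ▸ hU)
  have hfibre : (subspacesBetween U B t).ncard = (subspacesBetween U' B' t).ncard :=
    ncard_subspacesBetween_congr hB.2 hB'.2 hUU' (by rw [hdim B hB.1, hdim B' hB'.1]) t
  have hfibre_pos : 0 < (subspacesBetween U B t).ncard :=
    (Set.ncard_pos).2 (subspacesBetween_nonempty hB.2 hU (hdim B hB.1 ▸ htk))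
  have htotal := ncard_subspacesBetween_congr le_top le_top hUU' rfl t
  rw [h𝓑.ncard_subspacesBetween_top hB, h𝓑.ncard_subspacesBetween_top hB', ← hfibre] at htotal
  exact Nat.eq_of_mul_eq_mul_right hfibre_pos htotal

theorem blocksAbove_eq_of_le_flatClosure (h𝓑 : IsSteinerSystem t k 𝓑)
    {U U' : Submodule K (Fin n → K)} (hUU' : finrank K U = finrank K U') (hU : finrank K U ≤ t)
    (hU'U : U' ≤ flatClosure 𝓑 U) : blocksAbove 𝓑 U = blocksAbove 𝓑 U' :=
  Set.eq_of_subset_of_ncard_le (fun _ hB => ⟨hB.1, hU'U.trans (sInf_le hB)⟩)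
    (h𝓑.ncard_blocksAbove_congr hUU' hU).ge

theorem blocksAbove_subsingleton (h𝓑 : IsSteinerSystem t k 𝓑) {F : Submodule K (Fin n → K)}
    (hF : t ≤ finrank K F) : (blocksAbove 𝓑 F).Subsingleton := by
  obtain ⟨T, -, hTF, hT⟩ := subspacesBetween_nonempty bot_le (by simp) hF
  exact fun B₁ h₁ B₂ h₂ =>
    (h𝓑.2.2.2.2 T hT).unique ⟨h₁.1, hTF.trans h₁.2⟩ ⟨h₂.1, hTF.trans h₂.2⟩

theorem eq_top_of_lt (h𝓑 : IsSteinerSystem t k 𝓑) {F H : Submodule K (Fin n → K)}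
    (hF : F ∈ flats 𝓑) (ht : t ≤ finrank K F) (hH : H ∈ flats 𝓑) (hFH : F < H) : H = ⊤ := by
  rw [← flatClosure_eq_of_mem_flats hH, flatClosure, sInf_eq_top]
  intro B hB
  have hBF : B ∈ blocksAbove 𝓑 F := ⟨hB.1, hFH.le.trans hB.2⟩
  have hFB : F = B := by
    rw [← flatClosure_eq_of_mem_flats hF, flatClosure,
      (h𝓑.blocksAbove_subsingleton ht).eq_singleton_of_mem hBF, sInf_singleton]
  exact absurd (hB.2.trans hFB.ge) hFH.not_ge

theorem flatClosure_sup_le (h𝓑 : IsSteinerSystem t k 𝓑) {F x H : Submodule K (Fin n → K)}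
    (hF : F ∈ flats 𝓑) (hx : finrank K x = 1) (hxF : ¬ x ≤ F) (hH : H ∈ flats 𝓑) (hFH : F < H)
    (hHx : H ≤ flatClosure 𝓑 (F ⊔ x)) : flatClosure 𝓑 (F ⊔ x) ≤ H := by
  rcases le_or_gt t (finrank K F) with ht | ht
  · exact (h𝓑.eq_top_of_lt hF ht hH hFH).symm ▸ le_top
  obtain ⟨v, hvH, hvF⟩ := SetLike.exists_of_lt hFH
  have hFx := finrank_sup_of_finrank_eq_one hx hxF
  have hdim : finrank K (F ⊔ x : Submodule K _) = finrank K (F ⊔ span K {v} : Submodule K _) := by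
    rw [finrank_sup_span_singleton hvF, hFx]
  have hv_le : span K {v} ≤ H := (span_singleton_le_iff_mem v H).2 hvH
  have hblocks := h𝓑.blocksAbove_eq_of_le_flatClosure hdim (by omega)
    (sup_le (le_sup_left.trans (le_flatClosure _)) (hv_le.trans hHx))
  calc flatClosure 𝓑 (F ⊔ x) = flatClosure 𝓑 (F ⊔ span K {v}) := congrArg sInf hblocks
    _ ≤ H := flatClosure_le_of_le hH (sup_le hFH.le hv_le)

end IsSteinerSystem

theorem stmt9 {K : Type*} [Field K] [Fintype K] {n t k : ℕ}
    (𝓑 : Set (Submodule K (Fin n → K))) (h𝓑 : IsSteinerSystem t k 𝓑) :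
    let 𝓕 : Set (Submodule K (Fin n → K)) := {F | ∃ S ⊆ 𝓑, F = sInf S}
    (⊤ : Submodule K (Fin n → K)) ∈ 𝓕 ∧
    (∀ F₁ ∈ 𝓕, ∀ F₂ ∈ 𝓕, F₁ ⊓ F₂ ∈ 𝓕) ∧
    (∀ F ∈ 𝓕, ∀ x : Submodule K (Fin n → K), Module.finrank K x = 1 → ¬ x ≤ F →
      ∃! F' : Submodule K (Fin n → K), F' ∈ 𝓕 ∧ x ≤ F' ∧ FlatCovers 𝓕 F F') := by
  intro 𝓕
  refine ⟨top_mem_flats, fun _ h₁ _ h₂ => inf_mem_flats h₁ h₂, fun F hF x hx hxF => ?_⟩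
  set F' := flatClosure 𝓑 (F ⊔ x)
  have hxF' : x ≤ F' := le_sup_right.trans (le_flatClosure _)
  have hFF' : F < F' :=
    (le_sup_left.trans (le_flatClosure _)).lt_of_ne fun h => hxF (h ▸ hxF')
  refine ⟨F', ⟨flatClosure_mem_flats _, hxF', hFF', fun H hH hFH hHF' => ?_⟩, ?_⟩
  · exact hHF'.not_ge (h𝓑.flatClosure_sup_le hF hx hxF hH hFH hHF'.le)
  · rintro F'' ⟨hF'', hxF'', hFF'', hF''_covers⟩
    have hF'F'' : F' ≤ F'' := flatClosure_le_of_le hF'' (sup_le hFF''.le hxF'')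
    exact (hF'F''.eq_or_lt.resolve_right (hF''_covers F' (flatClosure_mem_flats _) hFF')).symm
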